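/- arXiv:1404.6766 — 2 statements merged into one kernel-verified Lean document; each statement's English description precedes it below -/
import Mathlib

section
/- Let (t_{s,j}) be a solution of the system (dist)–(ne2). Then: (a) whenever t_{s,k} > 0 and 1 ≤ j < k ≤ n, also t_{s,j} > 0; and (b) t_{1,j} > 0 for every j ∈ {1,…,n}. -/
/-- Probability of at least `m` successes in `l-1` Bernoulli(x) trials. -/
noncomputable def w (l m : ℕ) (x : ℝ) : ℝ :=
  ∑ i ∈ Finset.Icc m (l - 1), ((l - 1).choose i : ℝ) * x ^ i * (1 - x) ^ (l - 1 - i)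

/-- `W x = 1 - w x`. -/
noncomputable def W (l m : ℕ) (x : ℝ) : ℝ := 1 - w l m x

/-- `γ_{s,j} = ∑_{k=j}^n t_{s,k} q_k`. -/
noncomputable def gam (n : ℕ) (q : ℕ → ℝ) (t : ℕ → ℕ → ℝ) (s j : ℕ) : ℝ :=
  ∑ k ∈ Finset.Icc j n, t s k * q k

/-- `(t_{s,j})` is a solution of the system (dist)–(ne2). -/
def IsSolution (l m d n : ℕ) (M q : ℕ → ℝ) (t : ℕ → ℕ → ℝ) : Prop :=
  (∀ s ∈ Finset.Icc 1 d, ∀ j ∈ Finset.Icc 1 n, 0 ≤ t s j) ∧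
  ∀ j ∈ Finset.Icc 1 n,
    (∑ s ∈ Finset.Icc 1 d, t s j) = 1 ∧
    ∃ dj ∈ Finset.Icc 1 d,
      (∀ s ∈ Finset.Icc 1 d, s ≤ dj → 0 < t s j) ∧
      (∀ s ∈ Finset.Icc 1 d, dj < s → t s j = 0) ∧
      (∀ s ∈ Finset.Icc 1 dj,
        M s * W l m (gam n q t s j) = M 1 * W l m (gam n q t 1 j)) ∧
      (∀ s, dj ≤ s → s < d →
        M (s + 1) * W l m (gam n q t (s + 1) j) ≤ M s * W l m (gam n q t s j))

/-!
`w` is a Bernstein tail sum, so its derivative is a single positive Bernstein polynomial and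
`W` is strictly decreasing on `[0, 1]`, where all the `γ_{s,j}` lie. If `t_{s,j} = 0 < t_{s,j+1}`,
then `γ_{s,j} = γ_{s,j+1}`, while `t_{1,j} > 0` gives `γ_{1,j} > γ_{1,j+1}`. Hence
`M_1 W(γ_{1,j+1}) = M_s W(γ_{s,j+1}) = M_s W(γ_{s,j}) ≤ M_1 W(γ_{1,j}) < M_1 W(γ_{1,j+1})`.
-/

open Finset Polynomial

theorem w_eq_eval_sum_bernsteinPolynomial (l m : ℕ) (x : ℝ) :
    w l m x = (∑ i ∈ Icc m (l - 1), bernsteinPolynomial ℝ (l - 1) i).eval x := by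
  simp [w, bernsteinPolynomial, eval_finsetSum]

/-- The derivative of a Bernstein tail sum telescopes to a single Bernstein polynomial. -/
theorem derivative_sum_Icc_bernsteinPolynomial {R : Type*} [CommRing R] {N k : ℕ}
    (hk : 1 ≤ k) (hkN : k ≤ N) :
    derivative (∑ i ∈ Icc k N, bernsteinPolynomial R N i)
      = (N : R[X]) * bernsteinPolynomial R (N - 1) (k - 1) := by
  obtain ⟨k, rfl⟩ : ∃ k', k = k' + 1 := ⟨k - 1, by omega⟩
  rw [map_sum, ← Ico_add_one_right_eq_Icc, sum_Ico_eq_sum_range]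
  have hterm : ∀ i, derivative (bernsteinPolynomial R N (k + 1 + i))
      = (N : R[X]) * (bernsteinPolynomial R (N - 1) (k + i)
          - bernsteinPolynomial R (N - 1) (k + (i + 1))) := fun i => by
    rw [show k + 1 + i = k + i + 1 by omega, ← add_assoc, bernsteinPolynomial.derivative_succ]
  simp only [hterm]
  rw [← mul_sum, sum_range_sub' (fun i => bernsteinPolynomial R (N - 1) (k + i)),
    show k + (N + 1 - (k + 1)) = N by omega,
    bernsteinPolynomial.eq_zero_of_lt R (by omega : N - 1 < N)]
  simp

theorem w_strictMonoOn {l m : ℕ} (hm : 1 ≤ m) (hml : m ≤ l - 1) :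
    StrictMonoOn (w l m) (Set.Icc 0 1) := by
  rw [funext (w_eq_eval_sum_bernsteinPolynomial l m)]
  refine strictMonoOn_of_deriv_pos (convex_Icc 0 1) (Polynomial.continuous _).continuousOn ?_
  intro x hx
  rw [interior_Icc] at hx
  have hx0 : 0 < x := hx.1
  have hx1 : 0 < 1 - x := sub_pos.mpr hx.2
  have hl : 0 < ((l - 1 : ℕ) : ℝ) := by exact_mod_cast (by omega : 0 < l - 1)
  have hchoose : 0 < (((l - 1 - 1).choose (m - 1) : ℕ) : ℝ) := by
    exact_mod_cast Nat.choose_pos (by omega)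
  rw [Polynomial.deriv, derivative_sum_Icc_bernsteinPolynomial hm hml, bernsteinPolynomial]
  simp only [eval_mul, eval_natCast, eval_pow, eval_sub, eval_one, eval_X]
  positivity

theorem W_strictAntiOn {l m : ℕ} (hm : 1 ≤ m) (hml : m ≤ l - 1) :
    StrictAntiOn (W l m) (Set.Icc 0 1) :=
  fun _ hx _ hy hxy => sub_lt_sub_left (w_strictMonoOn hm hml hx hy hxy) 1

theorem gam_eq_add_gam_succ (q : ℕ → ℝ) (t : ℕ → ℕ → ℝ) (s : ℕ) {n j : ℕ} (hjn : j ≤ n) :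
    gam n q t s j = t s j * q j + gam n q t s (j + 1) := by
  rw [gam, Icc_eq_cons_Ioc hjn, sum_cons, ← Icc_add_one_left_eq_Ioc, gam]

namespace IsSolution

variable {l m d n : ℕ} {M q : ℕ → ℝ} {t : ℕ → ℕ → ℝ}

theorem one_mem_Icc (hsol : IsSolution l m d n M q t) {j : ℕ} (hj : j ∈ Icc 1 n) :
    1 ∈ Icc 1 d := by
  obtain ⟨-, dj, hdj, -⟩ := hsol.2 j hj
  simp only [mem_Icc] at hdj ⊢
  omega

theorem pos_one (hsol : IsSolution l m d n M q t) {j : ℕ} (hj : j ∈ Icc 1 n) : 0 < t 1 j := by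
  obtain ⟨-, dj, hdj, hpos, -⟩ := hsol.2 j hj
  exact hpos 1 (hsol.one_mem_Icc hj) (mem_Icc.mp hdj).1

theorem le_one (hsol : IsSolution l m d n M q t) {s k : ℕ} (hs : s ∈ Icc 1 d)
    (hk : k ∈ Icc 1 n) : t s k ≤ 1 :=
  (hsol.2 k hk).1 ▸ single_le_sum (f := fun s' => t s' k) (fun s' hs' => hsol.1 s' hs' k hk) hs

theorem gam_mem_Icc (hsol : IsSolution l m d n M q t) (hq : ∀ j ∈ Icc 1 n, 0 < q j)
    (hqsum : ∑ j ∈ Icc 1 n, q j < 1) {s j : ℕ} (hs : s ∈ Icc 1 d) (hj : 1 ≤ j) :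
    gam n q t s j ∈ Set.Icc 0 1 := by
  have hsub : Icc j n ⊆ Icc 1 n := Icc_subset_Icc_left hj
  constructor
  · exact sum_nonneg fun k hk => mul_nonneg (hsol.1 s hs k (hsub hk)) (hq k (hsub hk)).le
  · calc gam n q t s j ≤ ∑ k ∈ Icc j n, q k := sum_le_sum fun k hk =>
          mul_le_of_le_one_left (hq k (hsub hk)).le (hsol.le_one hs (hsub hk))
      _ ≤ ∑ k ∈ Icc 1 n, q k := sum_le_sum_of_subset_of_nonneg hsub fun k hk _ => (hq k hk).le
      _ ≤ 1 := hqsum.le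

/-- Indices up to `d_j` attain the common value; the chain (ne2) carries the bound beyond. -/
theorem payoff_le (hsol : IsSolution l m d n M q t) {j : ℕ} (hj : j ∈ Icc 1 n) {s : ℕ}
    (hs : s ∈ Icc 1 d) :
    M s * W l m (gam n q t s j) ≤ M 1 * W l m (gam n q t 1 j) := by
  obtain ⟨-, dj, hdj, -, -, heq, hchain⟩ := hsol.2 j hj
  rw [mem_Icc] at hs hdj
  rcases le_or_gt s dj with hsdj | hdjs
  · exact (heq s (mem_Icc.mpr ⟨hs.1, hsdj⟩)).le
  · induction s, hdjs using Nat.le_induction with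
    | base => exact (hchain dj le_rfl (by omega)).trans (heq dj (mem_Icc.mpr ⟨hdj.1, le_rfl⟩)).le
    | succ r hr ih => exact (hchain r (by omega) (by omega)).trans (ih ⟨by omega, by omega⟩)

theorem payoff_eq_of_pos (hsol : IsSolution l m d n M q t) {j : ℕ} (hj : j ∈ Icc 1 n) {s : ℕ}
    (hs : s ∈ Icc 1 d) (hpos : 0 < t s j) :
    M s * W l m (gam n q t s j) = M 1 * W l m (gam n q t 1 j) := by
  obtain ⟨-, dj, -, -, hzero, heq, -⟩ := hsol.2 j hj
  refine heq s (mem_Icc.mpr ⟨(mem_Icc.mp hs).1, ?_⟩)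
  by_contra! hdjs
  exact hpos.ne' (hzero s hs hdjs)

theorem pos_of_pos_succ (hsol : IsSolution l m d n M q t) (hm : 1 ≤ m) (hml : m ≤ l - 1)
    (hM1 : 0 < M 1) (hq : ∀ j ∈ Icc 1 n, 0 < q j) (hqsum : ∑ j ∈ Icc 1 n, q j < 1)
    {s j : ℕ} (hs : s ∈ Icc 1 d) (hj : 1 ≤ j) (hjn : j + 1 ≤ n) (hpos : 0 < t s (j + 1)) :
    0 < t s j := by
  have hjmem : j ∈ Icc 1 n := mem_Icc.mpr ⟨hj, by omega⟩
  have hj1mem : j + 1 ∈ Icc 1 n := mem_Icc.mpr ⟨by omega, hjn⟩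
  have h1 := hsol.one_mem_Icc hjmem
  refine (hsol.1 s hs j hjmem).lt_of_ne fun hzero => ?_
  have hgam_s : gam n q t s j = gam n q t s (j + 1) := by
    rw [gam_eq_add_gam_succ q t s (by omega : j ≤ n), ← hzero, zero_mul, zero_add]
  have hgam_one : gam n q t 1 (j + 1) < gam n q t 1 j := by
    rw [gam_eq_add_gam_succ q t 1 (by omega : j ≤ n)]
    linarith [mul_pos (hsol.pos_one hjmem) (hq j hjmem)]
  have hW : W l m (gam n q t 1 j) < W l m (gam n q t 1 (j + 1)) :=
    W_strictAntiOn hm hml (hsol.gam_mem_Icc hq hqsum h1 (by omega))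
      (hsol.gam_mem_Icc hq hqsum h1 hj) hgam_one
  refine lt_irrefl (M 1 * W l m (gam n q t 1 (j + 1))) ?_
  calc M 1 * W l m (gam n q t 1 (j + 1))
      _ = M s * W l m (gam n q t s (j + 1)) := (hsol.payoff_eq_of_pos hj1mem hs hpos).symm
      _ = M s * W l m (gam n q t s j) := by rw [hgam_s]
      _ ≤ M 1 * W l m (gam n q t 1 j) := hsol.payoff_le hjmem hs
      _ < M 1 * W l m (gam n q t 1 (j + 1)) := mul_lt_mul_of_pos_left hW hM1

end IsSolution

theorem stmt3_general (l m d n : ℕ) (hm : 1 ≤ m) (hml : m ≤ l - 1)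
    (M q : ℕ → ℝ)
    (hMpos : ∀ s ∈ Finset.Icc 1 d, 0 < M s)
    (hq : ∀ j ∈ Finset.Icc 1 n, 0 < q j)
    (hqsum : ∑ j ∈ Finset.Icc 1 n, q j < 1)
    (t : ℕ → ℕ → ℝ) (hsol : IsSolution l m d n M q t) :
    (∀ s ∈ Finset.Icc 1 d, ∀ j k : ℕ, 1 ≤ j → j < k → k ≤ n →
      0 < t s k → 0 < t s j) ∧
    (∀ j ∈ Finset.Icc 1 n, 0 < t 1 j) := by
  refine ⟨fun s hs j k hj hjk hkn hpos => ?_, fun j hj => hsol.pos_one hj⟩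
  have hM1 : 0 < M 1 := hMpos 1 (hsol.one_mem_Icc (mem_Icc.mpr ⟨hj, by omega⟩))
  induction k, hjk using Nat.le_induction with
  | base => exact hsol.pos_of_pos_succ hm hml hM1 hq hqsum hs hj hkn hpos
  | succ k hk ih =>
    exact ih (by omega) (hsol.pos_of_pos_succ hm hml hM1 hq hqsum hs (by omega) hkn hpos)

theorem stmt3 (l m d n : ℕ) (hm : 1 ≤ m) (hml : m ≤ l - 1) (hd : 2 ≤ d) (hn : 1 ≤ n)
    (M q : ℕ → ℝ)
    (hM : ∀ s ∈ Finset.Icc 1 d, ∀ r ∈ Finset.Icc 1 d, s ≤ r → M r ≤ M s)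
    (hMpos : ∀ s ∈ Finset.Icc 1 d, 0 < M s)
    (hq : ∀ j ∈ Finset.Icc 1 n, 0 < q j)
    (hqsum : ∑ j ∈ Finset.Icc 1 n, q j < 1)
    (t : ℕ → ℕ → ℝ) (hsol : IsSolution l m d n M q t) :
    (∀ s ∈ Finset.Icc 1 d, ∀ j k : ℕ, 1 ≤ j → j < k → k ≤ n →
      0 < t s k → 0 < t s j) ∧
    (∀ j ∈ Finset.Icc 1 n, 0 < t 1 j) :=
  stmt3_general l m d n hm hml M q hMpos hq hqsum t hsol
end

section
/- Let s and r be two nodes, each with node-selection probabilities, values γ, endpoints L and payoffs u defined as in the context. If u_{s,j} > u_{r,j} for some state j ∈ {1,…,n}, then there exists a state i ∈ {1,…,n} such that u_{s,i} > u_{r,i} and α_{s,i} < α_{r,i}. -/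
/-- `γ_{a,i} = ∑_{j=i}^n α_{a,j}` for a node with selection probabilities `α`. -/
noncomputable def gamN (n : ℕ) (α : ℕ → ℝ) (i : ℕ) : ℝ :=
  ∑ j ∈ Finset.Icc i n, α j

/-- The maximum expected payoff `u_{a,i} = (f_i(L_{a,i-1}) - c) · W(γ_{a,i})` at state `i`
for a node with selection probabilities `α` and lower endpoints `L`. -/
noncomputable def payoff (l m n : ℕ) (c : ℝ) (f : ℕ → ℝ → ℝ)
    (α : ℕ → ℝ) (L : ℕ → ℝ) (i : ℕ) : ℝ :=
  (f i (L (i - 1)) - c) * W l m (gamN n α i)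

/-!
By the recursion for `L`, consecutive payoffs of a node share a factor:
`u_{a,i} = (f_i(L_{a,i}) - c) W(γ_{a,i+1})` and
`u_{a,i+1} = (f_{i+1}(L_{a,i}) - c) W(γ_{a,i+1})`.
Since `W` is antitone on `[0, 1]` (the derivative of the binomial tail `w` is a Bernstein
polynomial) and `(f_i - c) / (f_{i+1} - c)` is increasing (Assumption 1), a strict inequality
`u_{r,·} < u_{s,·}` passes from one state to a neighbouring one as long as the `γ`'s are ordered
suitably at the shared index.

Suppose `α_{r,i} ≤ α_{s,i}` at every state with `u_{r,i} < u_{s,i}`. If `γ_{r,j} ≤ γ_{s,j}`, the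
inequality descends to state `1` keeping `γ_{r,i} ≤ γ_{s,i}`; as
`u_{a,1} = (f_1(v) - c) W(γ_{a,1})`, this contradicts the antitonicity of `W`. If
`γ_{s,j} < γ_{r,j}`, it ascends to state `n` keeping `γ_{s,i} < γ_{r,i}`, which contradicts
`γ_{a,n} = α_{a,n}`.
-/

open Finset

section Bernstein

open Polynomial

theorem derivative_sum_bernsteinPolynomial_Icc (R : Type*) [CommRing R] {k N : ℕ} (h : k ≤ N) :
    derivative (∑ i ∈ Icc (k + 1) N, bernsteinPolynomial R N i) =
      N * bernsteinPolynomial R (N - 1) k := by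
  rw [← Ico_add_one_right_eq_Icc, ← sum_Ico_add' (c := 1), derivative_sum]
  simp_rw [bernsteinPolynomial.derivative_succ]
  rw [← mul_sum, sum_sub_distrib, ← neg_sub (∑ x ∈ Ico k N, _), ← sum_sub_distrib,
    sum_Ico_sub _ h]
  rcases N with _ | N
  · simp
  · rw [bernsteinPolynomial.eq_zero_of_lt R (by omega : N + 1 - 1 < N + 1)]
    ring

theorem bernsteinPolynomial_eval_nonneg {n ν : ℕ} {x : ℝ} (hx : x ∈ Set.Icc 0 1) :
    0 ≤ (bernsteinPolynomial ℝ n ν).eval x :=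
  bernstein_nonneg (x := ⟨x, hx⟩)

theorem w_eq_eval (l m : ℕ) :
    w l m = fun x => (∑ i ∈ Icc m (l - 1), bernsteinPolynomial ℝ (l - 1) i).eval x := by
  ext x
  simp [w, bernsteinPolynomial, eval_finsetSum]

theorem w_monotoneOn {l m : ℕ} (hm : 1 ≤ m) : MonotoneOn (w l m) (Set.Icc 0 1) := by
  obtain ⟨k, rfl⟩ : ∃ k, m = k + 1 := ⟨m - 1, by omega⟩
  rcases le_or_gt k (l - 1) with h | h
  · rw [w_eq_eval]
    refine monotoneOn_of_deriv_nonneg (convex_Icc 0 1) (Polynomial.continuousOn _)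
      (Polynomial.differentiableOn _) fun x hx => ?_
    rw [Polynomial.deriv, derivative_sum_bernsteinPolynomial_Icc ℝ h, eval_mul, eval_natCast]
    exact mul_nonneg (Nat.cast_nonneg _) (bernsteinPolynomial_eval_nonneg (interior_subset hx))
  · rw [w_eq_eval, Icc_eq_empty (by omega)]
    simpa using monotoneOn_const

theorem w_lt_one {l m : ℕ} (hm : 1 ≤ m) {x : ℝ} (h0 : 0 ≤ x) (h1 : x < 1) :
    w l m x < 1 := by
  have hx : x ∈ Set.Icc 0 1 := ⟨h0, h1.le⟩
  have hsum : (1 - x) ^ (l - 1) +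
      ∑ i ∈ Icc 1 (l - 1), (bernsteinPolynomial ℝ (l - 1) i).eval x = 1 := by
    have := congrArg (eval x) (bernsteinPolynomial.sum ℝ (l - 1))
    rw [eval_finsetSum, range_eq_Ico, sum_eq_sum_Ico_succ_bot (by omega),
      Ico_add_one_right_eq_Icc] at this
    simpa [bernsteinPolynomial] using this
  have hle : w l m x ≤ ∑ i ∈ Icc 1 (l - 1), (bernsteinPolynomial ℝ (l - 1) i).eval x := by
    rw [w_eq_eval]
    simp only [eval_finsetSum]
    exact sum_le_sum_of_subset_of_nonneg (Icc_subset_Icc hm le_rfl)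
      fun i _ _ => bernsteinPolynomial_eval_nonneg hx
  have hpos : 0 < (1 - x) ^ (l - 1) := pow_pos (by linarith) _
  linarith

end Bernstein

theorem W_pos {l m : ℕ} (hm : 1 ≤ m) {x : ℝ} (h0 : 0 ≤ x) (h1 : x < 1) : 0 < W l m x :=
  sub_pos.2 (w_lt_one hm h0 h1)

theorem W_antitoneOn {l m : ℕ} (hm : 1 ≤ m) : AntitoneOn (W l m) (Set.Icc 0 1) :=
  fun _ hx _ hy hxy => sub_le_sub_left (w_monotoneOn hm hx hy hxy) 1

section Transfer

/- Applied with `g = f_i - c`, `h = f_{i+1} - c`, `x = L_{r,i}`, `y = L_{s,i}` and the weights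
`a = W(γ_{r,i+1})`, `b = W(γ_{s,i+1})`. -/

variable {g h : ℝ → ℝ} {x y a b : ℝ}

theorem num_mul_lt_of_den_mul_lt (hh : StrictMono h)
    (hgh : StrictMonoOn (fun t => g t / h t) {t | 0 < g t})
    (hgx : 0 < g x) (hgy : 0 < g y) (hhx : 0 < h x) (hhy : 0 < h y) (ha : 0 < a) (hb : 0 ≤ b)
    (hba : b ≤ a) (hlt : h x * a < h y * b) : g x * a < g y * b := by
  have hxy : x < y := by
    by_contra! hyx
    exact (mul_le_mul (hh.monotone hyx) hba hb hhx.le).not_gt hlt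
  calc g x * a = g x / h x * (h x * a) := by field_simp
    _ < g y / h y * (h y * b) :=
      mul_lt_mul'' (hgh hgx hgy hxy) hlt (div_pos hgx hhx).le (mul_pos hhx ha).le
    _ = g y * b := by field_simp

theorem den_mul_lt_of_num_mul_lt (hh : StrictMono h)
    (hgh : StrictMonoOn (fun t => g t / h t) {t | 0 < g t})
    (hgx : 0 < g x) (hgy : 0 < g y) (hhx : 0 < h x) (hhy : 0 < h y) (ha : 0 < a) (hb : 0 ≤ b)
    (hab : a ≤ b) (hlt : g x * a < g y * b) : h x * a < h y * b := by
  by_contra! hle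
  have hyx : y ≤ x := by
    by_contra! hxy
    exact (mul_lt_mul (hh hxy) hab ha hhy.le).not_ge hle
  have := calc g y * b = g y / h y * (h y * b) := by field_simp
    _ ≤ g x / h x * (h x * a) :=
      mul_le_mul (hgh.monotoneOn hgy hgx hyx) hle (mul_nonneg hhy.le hb) (div_pos hgx hhx).le
    _ = g x * a := by field_simp
  exact this.not_gt hlt

end Transfer

theorem gamN_eq_add (n : ℕ) (α : ℕ → ℝ) {i : ℕ} (hi : i ≤ n) :
    gamN n α i = α i + gamN n α (i + 1) := by
  rw [gamN, gamN, Icc_eq_cons_Ioc hi, sum_cons, Icc_add_one_left_eq_Ioc]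

theorem gamN_self (n : ℕ) (α : ℕ → ℝ) : gamN n α n = α n := by
  simp [gamN]

structure IsPenaltyFamily (n : ℕ) (c v : ℝ) (f : ℕ → ℝ → ℝ) : Prop where
  strictMono : ∀ j ∈ Icc 1 n, StrictMono (f j)
  lt_of_lt : ∀ i ∈ Icc 1 n, ∀ j ∈ Icc 1 n, i < j → ∀ x : ℝ, f i x < f j x
  lt_apply_one : c < f 1 v
  ratio_lt : ∀ i ∈ Icc 1 n, ∀ j ∈ Icc 1 n, i < j →
    ∀ x y : ℝ, y < x → c < f i y →
      (f i y - c) / (f j y - c) < (f i x - c) / (f j x - c)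

structure IsNode (l m n : ℕ) (c v : ℝ) (f : ℕ → ℝ → ℝ) (α L : ℕ → ℝ) : Prop where
  nonneg : ∀ j ∈ Icc 1 n, 0 ≤ α j
  sum_lt_one : ∑ j ∈ Icc 1 n, α j < 1
  L_zero : L 0 = v
  endpoint_eq : ∀ i ∈ Icc 1 n,
    (f i (L i) - c) * W l m (gamN n α (i + 1)) = (f i (L (i - 1)) - c) * W l m (gamN n α i)

variable {l m n : ℕ} {c v : ℝ} {f : ℕ → ℝ → ℝ}

namespace IsPenaltyFamily

variable {i : ℕ}

theorem sub_strictMono (hf : IsPenaltyFamily n c v f) (hi : i ∈ Icc 1 n) :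
    StrictMono fun x => f i x - c :=
  fun _ _ hxy => sub_lt_sub_right (hf.strictMono i hi hxy) c

theorem ratio_strictMonoOn (hf : IsPenaltyFamily n c v f) (hi : 1 ≤ i) (hin : i + 1 ≤ n) :
    StrictMonoOn (fun x => (f i x - c) / (f (i + 1) x - c)) {x | 0 < f i x - c} :=
  fun y hy x _ hyx => hf.ratio_lt i (mem_Icc.2 ⟨hi, by omega⟩) (i + 1)
    (mem_Icc.2 ⟨by omega, hin⟩) (by omega) x y hyx (sub_pos.1 hy)

end IsPenaltyFamily

namespace IsNode

variable {α L : ℕ → ℝ} {i : ℕ}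

theorem gamN_nonneg (hN : IsNode l m n c v f α L) (hi : 1 ≤ i) : 0 ≤ gamN n α i :=
  sum_nonneg fun j hj => hN.nonneg j (mem_Icc.2 ⟨hi.trans (mem_Icc.1 hj).1, (mem_Icc.1 hj).2⟩)

theorem gamN_lt_one (hN : IsNode l m n c v f α L) (hi : 1 ≤ i) : gamN n α i < 1 :=
  (sum_le_sum_of_subset_of_nonneg (Icc_subset_Icc hi le_rfl)
    fun j hj _ => hN.nonneg j hj).trans_lt hN.sum_lt_one

theorem W_gamN_pos (hm : 1 ≤ m) (hN : IsNode l m n c v f α L) (hi : 1 ≤ i) :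
    0 < W l m (gamN n α i) :=
  W_pos hm (hN.gamN_nonneg hi) (hN.gamN_lt_one hi)

theorem payoff_eq_mul_W_succ (hN : IsNode l m n c v f α L) (hi : i ∈ Icc 1 n) :
    payoff l m n c f α L i = (f i (L i) - c) * W l m (gamN n α (i + 1)) :=
  (hN.endpoint_eq i hi).symm

theorem apply_sub_pos_of_apply_pred_sub_pos (hm : 1 ≤ m) (hN : IsNode l m n c v f α L)
    (hi : i ∈ Icc 1 n)
    (h : 0 < f i (L (i - 1)) - c) : 0 < f i (L i) - c := by
  have hu : 0 < (f i (L i) - c) * W l m (gamN n α (i + 1)) :=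
    hN.payoff_eq_mul_W_succ hi ▸ mul_pos h (hN.W_gamN_pos hm (mem_Icc.1 hi).1)
  exact pos_of_mul_pos_left hu (hN.W_gamN_pos hm (by omega)).le

theorem apply_pred_sub_pos (hm : 1 ≤ m) (hf : IsPenaltyFamily n c v f)
    (hN : IsNode l m n c v f α L) :
    ∀ i ∈ Icc 1 n, 0 < f i (L (i - 1)) - c := by
  intro i hi
  obtain ⟨hi1, hin⟩ := mem_Icc.1 hi
  induction i, hi1 using Nat.le_induction with
  | base => simpa [hN.L_zero] using hf.lt_apply_one
  | succ i hi1 ih =>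
    have hi' : i ∈ Icc 1 n := mem_Icc.2 ⟨hi1, by omega⟩
    have := hN.apply_sub_pos_of_apply_pred_sub_pos hm hi' (ih hi' (by omega))
    exact this.trans (sub_lt_sub_right (hf.lt_of_lt i hi' (i + 1) hi (by omega) (L i)) c)

theorem apply_sub_pos (hm : 1 ≤ m) (hf : IsPenaltyFamily n c v f) (hN : IsNode l m n c v f α L)
    (hi : i ∈ Icc 1 n) : 0 < f i (L i) - c :=
  hN.apply_sub_pos_of_apply_pred_sub_pos hm hi (hN.apply_pred_sub_pos hm hf i hi)

end IsNode

section TwoNodes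

variable {αs αr Ls Lr : ℕ → ℝ} {i j : ℕ}

theorem W_gamN_le_of_gamN_le (hm : 1 ≤ m) (hs : IsNode l m n c v f αs Ls)
    (hr : IsNode l m n c v f αr Lr) (hi : 1 ≤ i) (h : gamN n αs i ≤ gamN n αr i) :
    W l m (gamN n αr i) ≤ W l m (gamN n αs i) :=
  W_antitoneOn hm ⟨hs.gamN_nonneg hi, (hs.gamN_lt_one hi).le⟩
    ⟨hr.gamN_nonneg hi, (hr.gamN_lt_one hi).le⟩ h

theorem payoff_lt_of_payoff_succ_lt (hm : 1 ≤ m) (hf : IsPenaltyFamily n c v f)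
    (hs : IsNode l m n c v f αs Ls) (hr : IsNode l m n c v f αr Lr)
    (hi : 1 ≤ i) (hin : i + 1 ≤ n)
    (hγ : gamN n αr (i + 1) ≤ gamN n αs (i + 1))
    (hu : payoff l m n c f αr Lr (i + 1) < payoff l m n c f αs Ls (i + 1)) :
    payoff l m n c f αr Lr i < payoff l m n c f αs Ls i := by
  have hi' : i ∈ Icc 1 n := mem_Icc.2 ⟨hi, by omega⟩
  have hi'' : i + 1 ∈ Icc 1 n := mem_Icc.2 ⟨by omega, hin⟩
  rw [hr.payoff_eq_mul_W_succ hi', hs.payoff_eq_mul_W_succ hi']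
  exact num_mul_lt_of_den_mul_lt (hf.sub_strictMono hi'') (hf.ratio_strictMonoOn hi hin)
    (hr.apply_sub_pos hm hf hi') (hs.apply_sub_pos hm hf hi')
    (hr.apply_pred_sub_pos hm hf (i + 1) hi'') (hs.apply_pred_sub_pos hm hf (i + 1) hi'')
    (hr.W_gamN_pos hm (by omega)) (hs.W_gamN_pos hm (by omega)).le
    (W_gamN_le_of_gamN_le hm hr hs (by omega) hγ) hu

theorem payoff_succ_lt_of_payoff_lt (hm : 1 ≤ m) (hf : IsPenaltyFamily n c v f)
    (hs : IsNode l m n c v f αs Ls) (hr : IsNode l m n c v f αr Lr)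
    (hi : 1 ≤ i) (hin : i + 1 ≤ n)
    (hγ : gamN n αs (i + 1) ≤ gamN n αr (i + 1))
    (hu : payoff l m n c f αr Lr i < payoff l m n c f αs Ls i) :
    payoff l m n c f αr Lr (i + 1) < payoff l m n c f αs Ls (i + 1) := by
  have hi' : i ∈ Icc 1 n := mem_Icc.2 ⟨hi, by omega⟩
  have hi'' : i + 1 ∈ Icc 1 n := mem_Icc.2 ⟨by omega, hin⟩
  rw [hr.payoff_eq_mul_W_succ hi', hs.payoff_eq_mul_W_succ hi'] at hu
  exact den_mul_lt_of_num_mul_lt (hf.sub_strictMono hi'') (hf.ratio_strictMonoOn hi hin)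
    (hr.apply_sub_pos hm hf hi') (hs.apply_sub_pos hm hf hi')
    (hr.apply_pred_sub_pos hm hf (i + 1) hi'') (hs.apply_pred_sub_pos hm hf (i + 1) hi'')
    (hr.W_gamN_pos hm (by omega)) (hs.W_gamN_pos hm (by omega)).le
    (W_gamN_le_of_gamN_le hm hs hr (by omega) hγ) hu

theorem exists_payoff_lt_and_lt_of_gamN_le (hm : 1 ≤ m) (hf : IsPenaltyFamily n c v f)
    (hs : IsNode l m n c v f αs Ls) (hr : IsNode l m n c v f αr Lr) (hj : j ∈ Icc 1 n)
    (hu : payoff l m n c f αr Lr j < payoff l m n c f αs Ls j)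
    (hγ : gamN n αr j ≤ gamN n αs j) :
    ∃ i ∈ Icc 1 n, payoff l m n c f αr Lr i < payoff l m n c f αs Ls i ∧ αs i < αr i := by
  by_contra! hα
  obtain ⟨hj1, hjn⟩ := mem_Icc.1 hj
  obtain ⟨hu1, hγ1⟩ : payoff l m n c f αr Lr 1 < payoff l m n c f αs Ls 1 ∧
      gamN n αr 1 ≤ gamN n αs 1 := by
    refine Nat.decreasingInduction' (fun i _ hi ⟨hu', hγ'⟩ => ?_) hj1 ⟨hu, hγ⟩
    have hu_i := payoff_lt_of_payoff_succ_lt hm hf hs hr hi (by omega) hγ' hu'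
    refine ⟨hu_i, ?_⟩
    rw [gamN_eq_add n αr (by omega), gamN_eq_add n αs (by omega)]
    linarith [hα i (mem_Icc.2 ⟨hi, by omega⟩) hu_i]
  simp only [payoff, Nat.sub_self, hr.L_zero, hs.L_zero] at hu1
  exact (lt_of_mul_lt_mul_left hu1 (sub_pos.2 hf.lt_apply_one).le).not_ge
    (W_gamN_le_of_gamN_le hm hr hs le_rfl hγ1)

theorem exists_payoff_lt_and_lt_of_gamN_lt (hm : 1 ≤ m) (hf : IsPenaltyFamily n c v f)
    (hs : IsNode l m n c v f αs Ls) (hr : IsNode l m n c v f αr Lr) (hj : j ∈ Icc 1 n)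
    (hu : payoff l m n c f αr Lr j < payoff l m n c f αs Ls j)
    (hγ : gamN n αs j < gamN n αr j) :
    ∃ i ∈ Icc 1 n, payoff l m n c f αr Lr i < payoff l m n c f αs Ls i ∧ αs i < αr i := by
  by_contra! hα
  obtain ⟨hj1, hjn⟩ := mem_Icc.1 hj
  have ascent : ∀ i, j ≤ i → i ≤ n →
      payoff l m n c f αr Lr i < payoff l m n c f αs Ls i ∧ gamN n αs i < gamN n αr i := by
    intro i hji
    induction i, hji using Nat.le_induction with
    | base => exact fun _ => ⟨hu, hγ⟩
    | succ i hji ih =>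
      intro hin
      obtain ⟨hu', hγ'⟩ := ih (by omega)
      have hγ'' : gamN n αs (i + 1) < gamN n αr (i + 1) := by
        rw [gamN_eq_add n αr (by omega), gamN_eq_add n αs (by omega)] at hγ'
        linarith [hα i (mem_Icc.2 ⟨by omega, by omega⟩) hu']
      exact ⟨payoff_succ_lt_of_payoff_lt hm hf hs hr (by omega) hin hγ''.le hu', hγ''⟩
  obtain ⟨hun, hγn⟩ := ascent n hjn le_rfl
  rw [gamN_self, gamN_self] at hγn
  exact (hα n (mem_Icc.2 ⟨by omega, le_rfl⟩) hun).not_gt hγn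

end TwoNodes

theorem stmt15_general (l m n : ℕ) (hm : 1 ≤ m)
    (c v : ℝ) (f : ℕ → ℝ → ℝ)
    (hfm : ∀ j ∈ Finset.Icc 1 n, StrictMono (f j))
    (hford : ∀ i ∈ Finset.Icc 1 n, ∀ j ∈ Finset.Icc 1 n, i < j → ∀ x : ℝ, f i x < f j x)
    (hfv : c < f 1 v)
    (hassum : ∀ i ∈ Finset.Icc 1 n, ∀ j ∈ Finset.Icc 1 n, i < j →
      ∀ x y : ℝ, y < x → c < f i y →
        (f i y - c) / (f j y - c) < (f i x - c) / (f j x - c))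
    (αs αr : ℕ → ℝ)
    (hαs0 : ∀ j ∈ Finset.Icc 1 n, 0 ≤ αs j) (hαssum : ∑ j ∈ Finset.Icc 1 n, αs j < 1)
    (hαr0 : ∀ j ∈ Finset.Icc 1 n, 0 ≤ αr j) (hαrsum : ∑ j ∈ Finset.Icc 1 n, αr j < 1)
    (Ls Lr : ℕ → ℝ) (hLs0 : Ls 0 = v) (hLr0 : Lr 0 = v)
    (hLsrec : ∀ i ∈ Finset.Icc 1 n,
      (f i (Ls i) - c) * W l m (gamN n αs (i + 1)) =
        (f i (Ls (i - 1)) - c) * W l m (gamN n αs i))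
    (hLrrec : ∀ i ∈ Finset.Icc 1 n,
      (f i (Lr i) - c) * W l m (gamN n αr (i + 1)) =
        (f i (Lr (i - 1)) - c) * W l m (gamN n αr i))
    (j : ℕ) (hj : j ∈ Finset.Icc 1 n)
    (hu : payoff l m n c f αr Lr j < payoff l m n c f αs Ls j) :
    ∃ i ∈ Finset.Icc 1 n,
      payoff l m n c f αr Lr i < payoff l m n c f αs Ls i ∧ αs i < αr i := by
  have hf : IsPenaltyFamily n c v f := ⟨hfm, hford, hfv, hassum⟩
  have hs : IsNode l m n c v f αs Ls := ⟨hαs0, hαssum, hLs0, hLsrec⟩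
  have hr : IsNode l m n c v f αr Lr := ⟨hαr0, hαrsum, hLr0, hLrrec⟩
  rcases le_or_gt (gamN n αr j) (gamN n αs j) with hγ | hγ
  · exact exists_payoff_lt_and_lt_of_gamN_le hm hf hs hr hj hu hγ
  · exact exists_payoff_lt_and_lt_of_gamN_lt hm hf hs hr hj hu hγ

theorem stmt15 (l m n : ℕ) (hm : 1 ≤ m) (hml : m ≤ l - 1) (hn : 1 ≤ n)
    (c v : ℝ) (f : ℕ → ℝ → ℝ)
    (hfc : ∀ j ∈ Finset.Icc 1 n, Continuous (f j))
    (hfm : ∀ j ∈ Finset.Icc 1 n, StrictMono (f j))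
    (hfb : ∀ j ∈ Finset.Icc 1 n, Function.Bijective (f j))
    (hford : ∀ i ∈ Finset.Icc 1 n, ∀ j ∈ Finset.Icc 1 n, i < j → ∀ x : ℝ, f i x < f j x)
    (hfv : c < f 1 v)
    (hassum : ∀ i ∈ Finset.Icc 1 n, ∀ j ∈ Finset.Icc 1 n, i < j →
      ∀ x y : ℝ, y < x → c < f i y →
        (f i y - c) / (f j y - c) < (f i x - c) / (f j x - c))
    (αs αr : ℕ → ℝ)
    (hαs0 : ∀ j ∈ Finset.Icc 1 n, 0 ≤ αs j) (hαssum : ∑ j ∈ Finset.Icc 1 n, αs j < 1)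
    (hαr0 : ∀ j ∈ Finset.Icc 1 n, 0 ≤ αr j) (hαrsum : ∑ j ∈ Finset.Icc 1 n, αr j < 1)
    (Ls Lr : ℕ → ℝ) (hLs0 : Ls 0 = v) (hLr0 : Lr 0 = v)
    (hLsrec : ∀ i ∈ Finset.Icc 1 n,
      (f i (Ls i) - c) * W l m (gamN n αs (i + 1)) =
        (f i (Ls (i - 1)) - c) * W l m (gamN n αs i))
    (hLrrec : ∀ i ∈ Finset.Icc 1 n,
      (f i (Lr i) - c) * W l m (gamN n αr (i + 1)) =
        (f i (Lr (i - 1)) - c) * W l m (gamN n αr i))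
    (j : ℕ) (hj : j ∈ Finset.Icc 1 n)
    (hu : payoff l m n c f αr Lr j < payoff l m n c f αs Ls j) :
    ∃ i ∈ Finset.Icc 1 n,
      payoff l m n c f αr Lr i < payoff l m n c f αs Ls i ∧ αs i < αr i :=
  stmt15_general l m n hm c v f hfm hford hfv hassum αs αr hαs0 hαssum hαr0 hαrsum Ls Lr hLs0 hLr0
    hLsrec hLrrec j hj hu
end
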